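/- Let G = (V, E) be a finite simple graph and s \notin V a new vertex. Form the weighted complete graph G' on V \cup \{s\} where edges of E have weight 1, edges from s to each v \in V have weight \alpha = 1 - 1/(2|V|^2), and all other pairs have weight 0. Then for any X \subseteq V that is a clique of size n \ge 1 in G, the density d(X, X \cup \{s\}) = (C(n,2) + \alpha n)/(C(n,2) + n) = (n - 1 + 2\alpha)/(n + 1), and this density is strictly increasing in n over cliques. -/

import Mathlib

/-!
The pairs counted by `d(X, X ∪ {s})` are the `C(n, 2)` pairs inside the clique `X`, each of
weight `1`, and the `n` pairs joining `X` to `s`, each of weight `α`. Hence the density is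
`(C(n, 2) + α n) / (C(n, 2) + n) = (n - 1 + 2α) / (n + 1) = 1 - 2(1 - α) / (n + 1)`, which is
strictly increasing in `n` because `α < 1`.
-/

/-- The set of (cross) edges with one endpoint in `X` and the other in `W`,
as unordered pairs of distinct vertices. -/
def crossE {V : Type*} [DecidableEq V] (X W : Finset V) : Finset (Sym2 V) :=
  ((X ×ˢ W).filter fun p => p.1 ≠ p.2).image (Function.uncurry Sym2.mk)

/-- Total weight of the cross edges from `X` to `W`. -/
noncomputable def wsum {V : Type*} [DecidableEq V] (w : Sym2 V → ℝ)
    (X W : Finset V) : ℝ :=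
  ∑ e ∈ crossE X W, w e

/-- Density of the cross edges from `X` to `W`. -/
noncomputable def dens {V : Type*} [DecidableEq V] (w : Sym2 V → ℝ)
    (X W : Finset V) : ℝ :=
  wsum w X W / ((crossE X W).card : ℝ)

section CrossEdges

variable {V : Type*} [DecidableEq V]

theorem mem_crossE {X W : Finset V} {e : Sym2 V} :
    e ∈ crossE X W ↔ ∃ x ∈ X, ∃ y ∈ W, x ≠ y ∧ s(x, y) = e := by
  simp [crossE, and_assoc]

theorem crossE_self (X : Finset V) : crossE X X = X.offDiag.image Sym2.mk.uncurry := by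
  unfold crossE
  congr 1
  ext p
  simp [and_assoc]

theorem card_crossE_self (X : Finset V) : (crossE X X).card = X.card.choose 2 := by
  rw [crossE_self, Sym2.card_image_offDiag]

theorem crossE_union_right (X W W' : Finset V) :
    crossE X (W ∪ W') = crossE X W ∪ crossE X W' := by
  rw [crossE, Finset.product_union, Finset.filter_union, Finset.image_union]
  rfl

theorem crossE_singleton_right {X : Finset V} {v : V} (hv : v ∉ X) :
    crossE X {v} = X.image (fun x => s(x, v)) := by
  ext e
  simp only [mem_crossE, Finset.mem_singleton, Finset.mem_image]
  constructor
  · rintro ⟨x, hx, _, rfl, -, rfl⟩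
    exact ⟨x, hx, rfl⟩
  · rintro ⟨x, hx, rfl⟩
    exact ⟨x, hx, v, rfl, ne_of_mem_of_not_mem hx hv, rfl⟩

theorem card_crossE_singleton_right {X : Finset V} {v : V} (hv : v ∉ X) :
    (crossE X {v}).card = X.card := by
  rw [crossE_singleton_right hv]
  exact Finset.card_image_of_injective _ fun _ _ => Sym2.congr_left.1

theorem disjoint_crossE_self_singleton {X : Finset V} {v : V} (hv : v ∉ X) :
    Disjoint (crossE X X) (crossE X {v}) := by
  rw [Finset.disjoint_left]
  intro e he he'
  obtain ⟨x, hx, y, hy, -, rfl⟩ := mem_crossE.1 he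
  obtain ⟨z, -, u, hu, -, hzv⟩ := mem_crossE.1 he'
  rw [Finset.mem_singleton.1 hu] at hzv
  rcases Sym2.mem_iff.1 (hzv ▸ Sym2.mem_mk_right z v) with rfl | rfl
  exacts [hv hx, hv hy]

theorem dens_union_singleton (w : Sym2 V → ℝ) {X : Finset V} {v : V} (hv : v ∉ X) {a b : ℝ}
    (ha : ∀ x ∈ X, ∀ y ∈ X, x ≠ y → w s(x, y) = a) (hb : ∀ x ∈ X, w s(x, v) = b) :
    dens w X (X ∪ {v}) =
      (a * X.card.choose 2 + b * X.card) / ((X.card.choose 2 : ℝ) + X.card) := by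
  have hsum_self : ∑ e ∈ crossE X X, w e = a * X.card.choose 2 := by
    rw [Finset.sum_eq_card_nsmul, card_crossE_self, nsmul_eq_mul, mul_comm]
    intro e he
    obtain ⟨x, hx, y, hy, hxy, rfl⟩ := mem_crossE.1 he
    exact ha x hx y hy hxy
  have hsum_singleton : ∑ e ∈ crossE X {v}, w e = b * X.card := by
    rw [crossE_singleton_right hv, Finset.sum_image fun _ _ _ _ => Sym2.congr_left.1,
      Finset.sum_eq_card_nsmul hb, nsmul_eq_mul, mul_comm]
  rw [dens, wsum, crossE_union_right, Finset.sum_union (disjoint_crossE_self_singleton hv),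
    Finset.card_union_of_disjoint (disjoint_crossE_self_singleton hv), card_crossE_self,
    card_crossE_singleton_right hv, hsum_self, hsum_singleton, Nat.cast_add]

end CrossEdges

theorem choose_two_add_mul_div_choose_two_add {k : ℕ} (hk : 1 ≤ k) (α : ℝ) :
    ((k.choose 2 : ℝ) + α * k) / ((k.choose 2 : ℝ) + k) = ((k : ℝ) - 1 + 2 * α) / (k + 1) := by
  have hk' : (1 : ℝ) ≤ k := by exact_mod_cast hk
  rw [Nat.cast_choose_two, div_eq_div_iff (by positivity) (by positivity)]
  ring

theorem strictMonoOn_sub_one_add_two_mul_div_add_one {α : ℝ} (hα : α < 1) :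
    StrictMonoOn (fun k : ℝ => (k - 1 + 2 * α) / (k + 1)) (Set.Ici 0) := by
  intro x hx y hy hxy
  simp only [Set.mem_Ici] at hx hy
  rw [div_lt_div_iff₀ (by linarith) (by linarith)]
  nlinarith

theorem dens_image_some_clique {V : Type*} [DecidableEq V] {G : SimpleGraph V}
    [DecidableRel G.Adj] {α : ℝ} {w : Sym2 (Option V) → ℝ}
    (hw1 : ∀ x y : V, x ≠ y → w s(some x, some y) = if G.Adj x y then 1 else 0)
    (hw2 : ∀ x : V, w s(none, some x) = α) {X : Finset V} (hX : G.IsClique (X : Set V)) :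
    dens w (X.image some) (X.image some ∪ {none}) =
      ((X.card.choose 2 : ℝ) + α * X.card) / ((X.card.choose 2 : ℝ) + X.card) := by
  have ha : ∀ x ∈ X.image some, ∀ y ∈ X.image some, x ≠ y → w s(x, y) = 1 := by
    simp only [Finset.mem_image]
    rintro _ ⟨x, hx, rfl⟩ _ ⟨y, hy, rfl⟩ hxy
    have hxy : x ≠ y := fun h => hxy (congrArg some h)
    rw [hw1 x y hxy, if_pos (hX hx hy hxy)]
  have hb : ∀ x ∈ X.image some, w s(x, none) = α := by
    simp only [Finset.mem_image]
    rintro _ ⟨x, -, rfl⟩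
    rw [Sym2.eq_swap, hw2]
  rw [dens_union_singleton w (by simp) ha hb, one_mul,
    Finset.card_image_of_injective _ (Option.some_injective V)]

theorem stmt_15 {V : Type*} [Fintype V] [DecidableEq V]
    (G : SimpleGraph V) [DecidableRel G.Adj]
    (α : ℝ) (hα : α = 1 - 1 / (2 * ((Fintype.card V : ℝ)) ^ 2))
    -- completed weights on `V ∪ {s}` (`s = none`): edges of `G` weigh 1,
    -- edges from `s` to each vertex weigh `α`, all other pairs weigh 0
    (w : Sym2 (Option V) → ℝ)
    (hw1 : ∀ x y : V, x ≠ y →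
      w (Sym2.mk (some x) (some y)) = if G.Adj x y then 1 else 0)
    (hw2 : ∀ x : V, w (Sym2.mk none (some x)) = α)
    (X : Finset V) (hX : G.IsClique (X : Set V))
    (n : ℕ) (hn : n = X.card) (hn1 : 1 ≤ n) :
    dens w (X.image some) (X.image some ∪ {none}) =
        ((n.choose 2 : ℝ) + α * n) / ((n.choose 2 : ℝ) + n) ∧
    dens w (X.image some) (X.image some ∪ {none}) =
        ((n : ℝ) - 1 + 2 * α) / ((n : ℝ) + 1) ∧
    -- the density is strictly increasing in the size over cliques:
    (∀ Y : Finset V, G.IsClique (Y : Set V) → X.card < Y.card →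
      dens w (X.image some) (X.image some ∪ {none}) <
        dens w (Y.image some) (Y.image some ∪ {none})) := by
  subst hn
  have hdens_closed {Y : Finset V} (hY : G.IsClique (Y : Set V)) (hY1 : 1 ≤ Y.card) :
      dens w (Y.image some) (Y.image some ∪ {none}) = ((Y.card : ℝ) - 1 + 2 * α) / (Y.card + 1) :=
    (dens_image_some_clique hw1 hw2 hY).trans (choose_two_add_mul_div_choose_two_add hY1 α)
  refine ⟨dens_image_some_clique hw1 hw2 hX, hdens_closed hX hn1, fun Y hY hXY => ?_⟩
  have hα1 : α < 1 := by
    obtain ⟨x, -⟩ := Finset.card_pos.1 hn1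
    have hV : 0 < Fintype.card V := Fintype.card_pos_iff.2 ⟨x⟩
    rw [hα, sub_lt_self_iff]
    positivity
  rw [hdens_closed hX hn1, hdens_closed hY (hn1.trans hXY.le)]
  exact strictMonoOn_sub_one_add_two_mul_div_add_one hα1
    (Set.mem_Ici.2 (Nat.cast_nonneg _)) (Set.mem_Ici.2 (Nat.cast_nonneg _)) (Nat.cast_lt.2 hXY)
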